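/- arXiv:2007.08780 — 5 statements merged into one kernel-verified Lean document; each statement's English description precedes it below -/
import Mathlib

section
/- Let α > 0. For all real u_-, u_+, the denominator u_+^2 + u_+*u_- + u_-^2 + α is strictly positive, and the two-point flux f^num(u_-, u_+) = (1/2) * (u_+^5 + u_+^4*u_- + u_+^3*u_-^2 + u_+^2*u_-^3 + u_+*u_-^4 + u_-^5 + (α/2)*(u_+^3 + u_+^2*u_- + u_+*u_-^2 + u_-^3)) / (u_+^2 + u_+*u_- + u_-^2 + α) satisfies the entropy-conservation condition (u_+^3 + α*u_+ - u_-^3 - α*u_-) * f^num(u_-, u_+) = (1/2)*(u_+^6 - u_-^6) + (α/4)*(u_+^4 - u_-^4). -/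
/-!
Both jumps in the entropy-conservation condition carry the factor `u₊ - u₋`: the jump of
`w(u) = u³ + αu` is `(u₊ - u₋)(u₊² + u₊u₋ + u₋² + α)` and the jump of `ψ` is `(u₊ - u₋)` times the
numerator of `f^num`. So `f^num` is the quotient of the two cofactors, and the cofactor of the
`w`-jump is positive because `u₊² + u₊u₋ + u₋² = ((u₊ + u₋)² + u₊² + u₋²) / 2 ≥ 0`.
-/

lemma sq_add_mul_add_sq_nonneg {R : Type*} [CommRing R] [LinearOrder R] [IsStrictOrderedRing R]
    (a b : R) : 0 ≤ a ^ 2 + a * b + b ^ 2 := by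
  nlinarith [sq_nonneg (a + b), sq_nonneg a, sq_nonneg b]

lemma cube_add_mul_sub_cube_sub_mul_eq_mul {R : Type*} [CommRing R] (α a b : R) :
    a ^ 3 + α * a - b ^ 3 - α * b = (a - b) * (a ^ 2 + a * b + b ^ 2 + α) := by
  ring

lemma flux_potential_sub_eq_mul {K : Type*} [Field K] [CharZero K] (α a b : K) :
    (1 / 2 : K) * (a ^ 6 - b ^ 6) + (α / 4) * (a ^ 4 - b ^ 4)
      = (a - b) * ((1 / 2 : K) *
          (a ^ 5 + a ^ 4 * b + a ^ 3 * b ^ 2 + a ^ 2 * b ^ 3 + a * b ^ 4 + b ^ 5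
            + (α / 2) * (a ^ 3 + a ^ 2 * b + a * b ^ 2 + b ^ 3))) := by
  ring

/-- Entropy-conservative flux for the cubic conservation law with the strictly
convex `L² ∩ L⁴` entropy `U(u) = u^4/4 + (α/2)*u^2`, `α > 0`. -/
theorem stmt_5 (α : ℝ) (hα : 0 < α) (um up : ℝ) :
    0 < up ^ 2 + up * um + um ^ 2 + α ∧
    (up ^ 3 + α * up - um ^ 3 - α * um) *
      ((1 / 2 : ℝ) *
        (up ^ 5 + up ^ 4 * um + up ^ 3 * um ^ 2 + up ^ 2 * um ^ 3
          + up * um ^ 4 + um ^ 5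
          + (α / 2) * (up ^ 3 + up ^ 2 * um + up * um ^ 2 + um ^ 3))
        / (up ^ 2 + up * um + um ^ 2 + α))
      = (1 / 2 : ℝ) * (up ^ 6 - um ^ 6) + (α / 4) * (up ^ 4 - um ^ 4) := by
  have hpos : 0 < up ^ 2 + up * um + um ^ 2 + α :=
    add_pos_of_nonneg_of_pos (sq_add_mul_add_sq_nonneg up um) hα
  refine ⟨hpos, ?_⟩
  rw [cube_add_mul_sub_cube_sub_mul_eq_mul, flux_potential_sub_eq_mul, mul_assoc, mul_div_cancel₀ _ hpos.ne']
end

section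
/- Let N ≥ 1 and let D be a real N×N matrix whose rows sum to zero, i.e. ∑_k D_{i,k} = 0 for every i. Then for every vector u ∈ ℝ^N and every index i, the flux-differencing volume term with the entropy-conservative cubic flux equals the split form: ∑_k D_{i,k} * 2 * (1/4) * (u_k^3 + u_k^2*u_i + u_k*u_i^2 + u_i^3) = (1/2) * ( ∑_k D_{i,k} u_k^3 + u_i * ∑_k D_{i,k} u_k^2 + u_i^2 * ∑_k D_{i,k} u_k ). -/
open Finset

/-- For a derivative matrix `D` with zero row sums, the flux-differencing
volume term with the entropy-conservative cubic flux equals the split form. -/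
theorem stmt_7 (N : ℕ) (hN : 1 ≤ N) (D : Matrix (Fin N) (Fin N) ℝ)
    (hD : ∀ i, ∑ k, D i k = 0) (u : Fin N → ℝ) (i : Fin N) :
    ∑ k, D i k * 2 * ((1 / 4 : ℝ) *
        ((u k) ^ 3 + (u k) ^ 2 * u i + u k * (u i) ^ 2 + (u i) ^ 3))
      = (1 / 2 : ℝ) * ((∑ k, D i k * (u k) ^ 3)
          + u i * ∑ k, D i k * (u k) ^ 2
          + (u i) ^ 2 * ∑ k, D i k * u k) := by
  have h := hD i
  have expand : ∀ k, D i k * 2 * ((1 / 4 : ℝ) *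
      ((u k) ^ 3 + (u k) ^ 2 * u i + u k * (u i) ^ 2 + (u i) ^ 3))
      = (1 / 2 : ℝ) * (D i k * (u k) ^ 3) + (1 / 2 : ℝ) * u i * (D i k * (u k) ^ 2)
        + (1 / 2 : ℝ) * (u i) ^ 2 * (D i k * u k) + ((u i) ^ 3 / 2) * D i k := by
    intro k; ring
  rw [Finset.sum_congr rfl fun k _ => expand k]
  simp only [Finset.sum_add_distrib, ← Finset.mul_sum, h, mul_zero]
  ring
end

section
/- Let N ≥ 1, let D be a real N×N matrix and M a diagonal N×N matrix with positive diagonal entries such that M*D + D^T*M = 0 and every row of D sums to zero. Let f^vol : ℝ×ℝ → ℝ be symmetric, and let w, ψ : ℝ → ℝ satisfy the entropy-conservation condition (w(b) - w(a)) * f^vol(a, b) = ψ(b) - ψ(a) for all a, b ∈ ℝ. Then for every u ∈ ℝ^N the semi-discrete entropy production vanishes: ∑_i w(u_i) * M_{i,i} * ∑_k D_{i,k} * 2 * f^vol(u_i, u_k) = 0. In other words, the flux-differencing semi-discretization ∂_t u_i = −∑_k D_{i,k} * 2 * f^vol(u_i, u_k) conserves the total discrete entropy in the periodic setting. -/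
open Finset Matrix

/-- For a periodic SBP operator (`M*D + Dᵀ*M = 0`, `M` diagonal with positive
diagonal, `D` consistent) and an entropy-conservative symmetric volume flux,
the flux-differencing semi-discretization conserves the total discrete
entropy: the semi-discrete entropy production vanishes. -/
theorem stmt_8 (N : ℕ) (hN : 1 ≤ N)
    (D M : Matrix (Fin N) (Fin N) ℝ)
    (hMdiag : ∀ i j, i ≠ j → M i j = 0)
    (hMpos : ∀ i, 0 < M i i)
    (hSBP : M * D + Dᵀ * M = 0)
    (hDrow : ∀ i, ∑ k, D i k = 0)
    (fvol : ℝ → ℝ → ℝ) (hsym : ∀ a b, fvol a b = fvol b a)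
    (w ψ : ℝ → ℝ)
    (hEC : ∀ a b, (w b - w a) * fvol a b = ψ b - ψ a)
    (u : Fin N → ℝ) :
    ∑ i, w (u i) * M i i * ∑ k, D i k * 2 * fvol (u i) (u k) = 0 := by
  -- antisymmetry of M*D
  have hanti : ∀ i k, M i i * D i k = -(M k k * D k i) := by
    intro i k
    have h0 := congrFun (congrFun hSBP i) k
    simp only [Matrix.add_apply, Matrix.mul_apply, Matrix.transpose_apply,
      Matrix.zero_apply] at h0
    have h1 : ∑ j, M i j * D j k = M i i * D i k := by
      rw [Finset.sum_eq_single i]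
      · intro j _ hj; rw [hMdiag i j (Ne.symm hj), zero_mul]
      · intro h; exact absurd (Finset.mem_univ i) h
    have h2 : ∑ j, D j i * M j k = D k i * M k k := by
      rw [Finset.sum_eq_single k]
      · intro j _ hj; rw [hMdiag j k hj, mul_zero]
      · intro h; exact absurd (Finset.mem_univ k) h
    rw [h1, h2] at h0
    linarith [h0]
  set S := ∑ i, w (u i) * M i i * ∑ k, D i k * 2 * fvol (u i) (u k) with hS
  have key : 2 * S = 2 * ∑ i, ∑ k, M i i * D i k * (ψ (u i) - ψ (u k)) := by
    have hS2 : S = ∑ i, ∑ k, M i i * D i k * (2 * w (u i) * fvol (u i) (u k)) := by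
      rw [hS]
      congr 1; ext i
      rw [Finset.mul_sum]
      congr 1; ext k; ring
    -- swapped version
    have hS3 : S = -∑ i, ∑ k, M i i * D i k * (2 * w (u k) * fvol (u i) (u k)) := by
      rw [hS2, Finset.sum_comm, ← Finset.sum_neg_distrib]
      congr 1; ext k
      rw [← Finset.sum_neg_distrib]
      congr 1; ext i
      rw [hanti i k, hsym (u i) (u k)]
      ring
    have : 2 * S = ∑ i, ∑ k, M i i * D i k *
        (2 * (w (u i) - w (u k)) * fvol (u i) (u k)) := by
      nth_rewrite 1 [two_mul]
      nth_rewrite 1 [hS2]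
      nth_rewrite 1 [hS3]
      rw [← sub_eq_add_neg, ← Finset.sum_sub_distrib]
      congr 1; ext i
      rw [← Finset.sum_sub_distrib]
      congr 1; ext k; ring
    rw [this, Finset.mul_sum]
    congr 1; ext i
    rw [Finset.mul_sum]
    congr 1; ext k
    have := hEC (u k) (u i)
    rw [hsym (u k) (u i)] at this
    linear_combination 2 * M i i * D i k * this
  have hzero : ∑ i, ∑ k, M i i * D i k * (ψ (u i) - ψ (u k)) = 0 := by
    have e1 : ∑ i, ∑ k, M i i * D i k * ψ (u i) = 0 := by
      apply Finset.sum_eq_zero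
      intro i _
      have : ∑ k, M i i * D i k * ψ (u i) = (M i i * ψ (u i)) * ∑ k, D i k := by
        rw [Finset.mul_sum]; congr 1; ext k; ring
      rw [this, hDrow i, mul_zero]
    have e2 : ∑ i, ∑ k, M i i * D i k * ψ (u k) = 0 := by
      rw [Finset.sum_comm]
      apply Finset.sum_eq_zero
      intro k _
      have : ∑ i, M i i * D i k * ψ (u k) = -(M k k * ψ (u k)) * ∑ i, D k i := by
        rw [Finset.mul_sum]
        congr 1; ext i
        rw [hanti i k]; ring
      rw [this, hDrow k, mul_zero]
    calc ∑ i, ∑ k, M i i * D i k * (ψ (u i) - ψ (u k))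
        = (∑ i, ∑ k, M i i * D i k * ψ (u i)) -
          ∑ i, ∑ k, M i i * D i k * ψ (u k) := by
          rw [← Finset.sum_sub_distrib]
          congr 1; ext i
          rw [← Finset.sum_sub_distrib]
          congr 1; ext k; ring
      _ = 0 := by rw [e1, e2, sub_zero]
  rw [hzero, mul_zero] at key
  linarith
end

section
/- Let N ≥ 1, let S be a skew-symmetric real N×N matrix, and let g : ℝ×ℝ → ℝ be symmetric, i.e. g(a,b) = g(b,a). Then for every u ∈ ℝ^N, ∑_{i,k} S_{i,k} * g(u_i, u_k) = 0. Consequently, for a periodic SBP operator with diagonal mass matrix M (so that S = M*D is skew-symmetric), the flux-differencing semi-discretization ∂_t u_i = −∑_k D_{i,k} * 2 * f^vol(u_i, u_k) with a symmetric two-point volume flux f^vol conserves the total discrete mass: ∑_i M_{i,i} * ∂_t u_i = 0. -/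
open Finset Matrix

lemma skew_double_sum_zero {N : ℕ} (S : Matrix (Fin N) (Fin N) ℝ)
    (hS : Sᵀ = -S) (g : ℝ → ℝ → ℝ) (hg : ∀ a b, g a b = g b a)
    (u : Fin N → ℝ) : (∑ i, ∑ k, S i k * g (u i) (u k)) = 0 := by
  have hsk : ∀ i k : Fin N, S i k = -S k i := fun i k => by
    have := congrFun (congrFun hS k) i
    simpa [Matrix.transpose_apply] using this
  have h : (∑ i, ∑ k, S i k * g (u i) (u k))
      = ∑ i, ∑ k, -(S i k * g (u i) (u k)) := by
    rw [Finset.sum_comm]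
    refine Finset.sum_congr rfl fun x _ => Finset.sum_congr rfl fun y _ => ?_
    rw [hsk y x, hg (u y) (u x)]
    ring
  have h2 : (∑ i, ∑ k, -(S i k * g (u i) (u k)))
      = -(∑ i, ∑ k, S i k * g (u i) (u k)) := by
    simp
  rw [h2] at h
  linarith

/-- For a skew-symmetric matrix `S` and a symmetric two-point function `g`,
the double sum `∑_{i,k} S_{i,k} g(u i, u k)` vanishes. Consequently, the
flux-differencing semi-discretization with a periodic SBP operator with
diagonal mass matrix and a symmetric volume flux conserves the total
discrete mass. -/
theorem stmt_9 (N : ℕ) (hN : 1 ≤ N)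
    (S : Matrix (Fin N) (Fin N) ℝ) (hS : Sᵀ = -S)
    (g : ℝ → ℝ → ℝ) (hg : ∀ a b, g a b = g b a)
    (u : Fin N → ℝ) :
    (∑ i, ∑ k, S i k * g (u i) (u k)) = 0 ∧
    (∀ (M D : Matrix (Fin N) (Fin N) ℝ) (fvol : ℝ → ℝ → ℝ),
      (∀ i j, i ≠ j → M i j = 0) → (∀ i, 0 < M i i) →
      (M * D)ᵀ = -(M * D) →
      (∀ a b, fvol a b = fvol b a) →
      ∑ i, M i i * -(∑ k, D i k * 2 * fvol (u i) (u k)) = 0) := by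
  refine ⟨skew_double_sum_zero S hS g hg u, ?_⟩
  intro M D fvol hMdiag _ hskew hf
  have key := skew_double_sum_zero (M * D) hskew
      (fun a b => 2 * fvol a b) (fun a b => by show 2 * fvol a b = 2 * fvol b a; rw [hf]) u
  have hMD : ∀ i k, (M * D) i k = M i i * D i k := by
    intro i k
    rw [Matrix.mul_apply]
    rw [Finset.sum_eq_single i]
    · intro j _ hj; rw [hMdiag i j (Ne.symm hj), zero_mul]
    · intro h; exact absurd (Finset.mem_univ i) h
  have : ∑ i, M i i * -(∑ k, D i k * 2 * fvol (u i) (u k))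
      = -(∑ i, ∑ k, (M * D) i k * (2 * fvol (u i) (u k))) := by
    rw [← Finset.sum_neg_distrib]
    refine Finset.sum_congr rfl fun i _ => ?_
    simp only [hMD, mul_neg, Finset.mul_sum]
    congr 1
    exact Finset.sum_congr rfl fun k _ => by ring
  rw [this, key, neg_zero]
end

section
/- Let u₋ = (a₋, b₋) and u₊ = (a₊, b₊) in ℝ² with a₋ ≠ a₊ and U₋ ≠ U₊, where U± = exp(a±²/2 − b±). Define the averages ⟨x⟩ = (x₊ + x₋)/2, the logarithmic mean U^log = (U₊ − U₋)/((a₊²/2 − b₊) − (a₋²/2 − b₋)) (well defined since log U₊ ≠ log U₋), and the two-point flux f₁ = (1/6)*(a₊³ − a₋³)/(a₊ − a₋) + ⟨log U⟩ and f₂ = ⟨a⟩*f₁ − ⟨(1/6)a³ + a·log U⟩ − (⟨U⟩/U^log)*⟨a⟩, where log U± = a±²/2 − b±. Then this flux is entropy conservative for the Keyfitz–Kranzer system with entropy U = exp(u₁²/2 − u₂): (a₊U₊ − a₋U₋) * f₁ + (−U₊ + U₋) * f₂ = ψ₊ − ψ₋, where ψ± = ((2/3)*a±³ − a±*b±) *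 U±. -/
/-- The entropy-conservative two-point numerical flux for the Keyfitz–Kranzer
system with entropy `U = exp(u₁²/2 − u₂)`: denoting `U± = exp(a±²/2 − b±)`,
`log U± = a±²/2 − b±`, the logarithmic mean `U^log`, and the flux components
`f₁, f₂` built from arithmetic means, the jump condition
`(a₊U₊ − a₋U₋) f₁ + (−U₊ + U₋) f₂ = ψ₊ − ψ₋` holds, where
`ψ± = ((2/3)a±³ − a±b±) U±`. -/
theorem stmt_15 (am bm ap bp : ℝ) (ha : am ≠ ap)
    (hU : Real.exp (am ^ 2 / 2 - bm) ≠ Real.exp (ap ^ 2 / 2 - bp)) :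
    ∀ Um Up Ulog f₁ f₂ : ℝ,
      Um = Real.exp (am ^ 2 / 2 - bm) →
      Up = Real.exp (ap ^ 2 / 2 - bp) →
      Ulog = (Up - Um) / ((ap ^ 2 / 2 - bp) - (am ^ 2 / 2 - bm)) →
      f₁ = (1 / 6 : ℝ) * (ap ^ 3 - am ^ 3) / (ap - am)
            + ((ap ^ 2 / 2 - bp) + (am ^ 2 / 2 - bm)) / 2 →
      f₂ = (ap + am) / 2 * f₁
            - (((1 / 6 : ℝ) * ap ^ 3 + ap * (ap ^ 2 / 2 - bp))
                + ((1 / 6 : ℝ) * am ^ 3 + am * (am ^ 2 / 2 - bm))) / 2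
            - ((Up + Um) / 2 / Ulog) * ((ap + am) / 2) →
      (ap * Up - am * Um) * f₁ + (-Up + Um) * f₂
        = ((2 / 3 : ℝ) * ap ^ 3 - ap * bp) * Up
          - ((2 / 3 : ℝ) * am ^ 3 - am * bm) * Um := by
  intro Um Up Ulog f₁ f₂ hm hp hlog h1 h2
  have hUmp : Um ≠ Up := by rw [hm, hp]; exact hU
  have hL : (ap ^ 2 / 2 - bp) - (am ^ 2 / 2 - bm) ≠ 0 := by
    intro h
    apply hU
    have : am ^ 2 / 2 - bm = ap ^ 2 / 2 - bp := by linarith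
    rw [this]
  have hamap : ap - am ≠ 0 := sub_ne_zero.mpr (Ne.symm ha)
  have hUne : Up - Um ≠ 0 := sub_ne_zero.mpr (Ne.symm hUmp)
  have hUlog : Ulog ≠ 0 := by
    rw [hlog]
    exact div_ne_zero hUne hL
  subst h1 h2 hlog
  field_simp
  ring
end
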